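/- arXiv:2007.11300 — 3 statements merged into one kernel-verified Lean document; each statement's English description precedes it below -/
import Mathlib

section
/- Let 0 < γ < 1 and −1/2 < ν ≤ 0. Then for all x > 0, ∫_0^x e^{−γt} t^ν I_ν(t) dt > (1/(1−γ)) · { e^{−γx} x^ν ( I_ν(x) − x^ν/(Γ(ν+1)·2^ν) ) − γ(2ν+1, γx)/(Γ(ν+1)·2^ν·γ^{2ν}) }, where γ(a,x) denotes the lower incomplete gamma function. -/
open Real MeasureTheory

/-- Modified Bessel function of the first kind, `I_ν(x) = ∑_{k} (x/2)^{ν+2k} / (Γ(ν+k+1) k!)`. -/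
noncomputable def besselI (ν x : ℝ) : ℝ :=
  ∑' k : ℕ, (x / 2) ^ (ν + 2 * (k : ℝ)) / (Real.Gamma (ν + (k : ℝ) + 1) * (Nat.factorial k : ℝ))

/-- Modified Bessel function of the second kind, `K_ν(x) = ∫_0^∞ e^{-x cosh t} cosh(ν t) dt`. -/
noncomputable def besselK (ν x : ℝ) : ℝ :=
  ∫ t in Set.Ioi (0 : ℝ), Real.exp (-x * Real.cosh t) * Real.cosh (ν * t)

/-- Lower incomplete gamma function `γ(a, x) = ∫_0^x t^{a-1} e^{-t} dt`. -/
noncomputable def lowerIncGamma (a x : ℝ) : ℝ :=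
  ∫ t in (0 : ℝ)..x, t ^ (a - 1) * Real.exp (-t)

/-!
Write `t ^ ν * I_ν(t) = ∑ a_k t ^ (2ν + 2k)` and `P(p) = ∫_0^x e^{-γt} t^p dt`. Integrating term
by term, the left side is `∑ a_k P(2ν + 2k)`; differentiating `e^{-γt} t^(2ν+2k+2)` turns the
boundary term into `∑ (2ν + 2k + 2) a_{k+1} P(2ν + 2k + 1) - γ ∑_{k ≥ 1} a_k P(2ν + 2k)`; and the
incomplete gamma term is `γ a_0 P(2ν)`. The claim thus reduces to
`∑ (2ν + 2k + 2) a_{k+1} P(2ν + 2k + 1) < ∑ a_k P(2ν + 2k)`. For `ν ≤ 0` the coefficients satisfy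
`((2ν + 2k + 2) a_{k+1})² ≤ a_k a_{k+1}`, so by AM–GM under the integral each odd term is at most
the mean of its two even neighbours, and summing leaves `a_0 P(2ν) / 2 > 0` to spare.
-/

open Filter Set intervalIntegral
open scoped Nat

noncomputable def besselICoeff (ν : ℝ) (k : ℕ) : ℝ :=
  (2 ^ (ν + 2 * k) * Gamma (ν + k + 1) * k !)⁻¹

section Coefficients

variable {ν : ℝ}

lemma besselICoeff_pos (hν : -1 < ν) (k : ℕ) : 0 < besselICoeff ν k := by
  have : 0 < Gamma (ν + k + 1) := Gamma_pos_of_pos (by linarith [k.cast_nonneg (α := ℝ)])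
  unfold besselICoeff
  positivity

lemma besselICoeff_eq_mul_succ (hν : -1 < ν) (k : ℕ) :
    besselICoeff ν k = 4 * (ν + k + 1) * (k + 1) * besselICoeff ν (k + 1) := by
  have hνk : 0 < ν + k + 1 := by linarith [k.cast_nonneg (α := ℝ)]
  have hΓ : Gamma (ν + k + 1) ≠ 0 := (Gamma_pos_of_pos hνk).ne'
  have hpow : (2 : ℝ) ^ (ν + 2 * ↑(k + 1)) = 2 ^ (ν + 2 * k) * 4 := by
    rw [Nat.cast_succ, show ν + 2 * (k + 1 : ℝ) = ν + 2 * k + 2 by ring, rpow_add two_pos]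
    norm_num
  have hΓsucc : Gamma (ν + ↑(k + 1) + 1) = (ν + k + 1) * Gamma (ν + k + 1) := by
    rw [Nat.cast_succ, ← Gamma_add_one hνk.ne']
    ring_nf
  rw [besselICoeff, besselICoeff, hpow, hΓsucc, Nat.factorial_succ, Nat.cast_mul, Nat.cast_succ]
  field_simp

lemma summable_besselICoeff_mul_pow (hν : -1 < ν) (y : ℝ) :
    Summable fun k => besselICoeff ν k * y ^ k := by
  refine summable_of_ratio_norm_eventually_le (r := 1 / 2) (by norm_num) ?_
  filter_upwards [eventually_ge_atTop (⌈‖y‖⌉₊ + 1)] with k hk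
  have hk1 : (1 : ℝ) ≤ k := by exact_mod_cast (Nat.le_add_left 1 _).trans hk
  have hyk : ‖y‖ ≤ k := (Nat.le_ceil _).trans (by exact_mod_cast (Nat.le_succ _).trans hk)
  have hy : ‖y‖ ≤ 2 * (ν + k + 1) * (k + 1) := by nlinarith
  rw [norm_mul, norm_mul, norm_pow, norm_pow, Real.norm_of_nonneg (besselICoeff_pos hν _).le,
    Real.norm_of_nonneg (besselICoeff_pos hν _).le, besselICoeff_eq_mul_succ hν k, pow_succ]
  calc besselICoeff ν (k + 1) * (‖y‖ ^ k * ‖y‖)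
      ≤ besselICoeff ν (k + 1) * (‖y‖ ^ k * (2 * (ν + k + 1) * (k + 1))) :=
        mul_le_mul_of_nonneg_left (by gcongr) (besselICoeff_pos hν _).le
    _ = _ := by ring

lemma sq_besselICoeff_succ_mul_le (hν : -1 < ν) (hν0 : ν ≤ 0) (k : ℕ) :
    (besselICoeff ν (k + 1) * (2 * ν + 2 * k + 2)) ^ 2
      ≤ besselICoeff ν k * besselICoeff ν (k + 1) := by
  have ha := besselICoeff_pos hν (k + 1)
  have hνk : 0 < ν + k + 1 := by linarith [k.cast_nonneg (α := ℝ)]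
  rw [besselICoeff_eq_mul_succ hν k]
  have : (2 * ν + 2 * k + 2) ^ 2 ≤ 4 * (ν + k + 1) * (k + 1) := by nlinarith
  calc (besselICoeff ν (k + 1) * (2 * ν + 2 * k + 2)) ^ 2
      = besselICoeff ν (k + 1) ^ 2 * (2 * ν + 2 * k + 2) ^ 2 := by ring
    _ ≤ besselICoeff ν (k + 1) ^ 2 * (4 * (ν + k + 1) * (k + 1)) := by gcongr
    _ = _ := by ring

end Coefficients

noncomputable def expRpowIntegral (γ x p : ℝ) : ℝ :=
  ∫ t in (0 : ℝ)..x, exp (-γ * t) * t ^ p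

section ExpRpowIntegral

variable {γ x p : ℝ}

lemma intervalIntegrable_exp_mul_rpow (hp : -1 < p) :
    IntervalIntegrable (fun t => exp (-γ * t) * t ^ p) volume 0 x :=
  (intervalIntegrable_rpow' hp).continuousOn_mul (by fun_prop)

lemma expRpowIntegral_nonneg (hx : 0 ≤ x) : 0 ≤ expRpowIntegral γ x p :=
  intervalIntegral.integral_nonneg hx fun _ ht => mul_nonneg (exp_nonneg _) (rpow_nonneg ht.1 p)

lemma expRpowIntegral_pos (hx : 0 < x) (hp : -1 < p) : 0 < expRpowIntegral γ x p :=
  intervalIntegral_pos_of_pos_on (intervalIntegrable_exp_mul_rpow hp)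
    (fun _ ht => mul_pos (exp_pos _) (rpow_pos_of_pos ht.1 p)) hx

lemma expRpowIntegral_add_le (hx : 0 ≤ x) (hp : -1 < p) {q : ℝ} (hq : 0 ≤ q) :
    expRpowIntegral γ x (p + q) ≤ x ^ q * expRpowIntegral γ x p := by
  rw [expRpowIntegral, expRpowIntegral, ← intervalIntegral.integral_const_mul]
  refine integral_mono_on_of_le_Ioo hx (intervalIntegrable_exp_mul_rpow (by linarith))
    ((intervalIntegrable_exp_mul_rpow hp).const_mul _) fun t ht => ?_
  rw [rpow_add ht.1]
  have htq : t ^ q ≤ x ^ q := rpow_le_rpow ht.1.le ht.2.le hq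
  have hw : 0 ≤ exp (-γ * t) * t ^ p := mul_nonneg (exp_nonneg _) (rpow_nonneg ht.1.le p)
  nlinarith [mul_le_mul_of_nonneg_left htq hw]

lemma exp_mul_rpow_add_one_eq (hx : 0 ≤ x) (hp : -1 < p) :
    exp (-γ * x) * x ^ (p + 1)
      = (p + 1) * expRpowIntegral γ x p - γ * expRpowIntegral γ x (p + 1) := by
  have hderiv : ∀ t ∈ Ioo 0 x, HasDerivAt (fun t => exp (-γ * t) * t ^ (p + 1))
      ((p + 1) * (exp (-γ * t) * t ^ p) - γ * (exp (-γ * t) * t ^ (p + 1))) t := by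
    intro t ht
    have hexp : HasDerivAt (fun t => exp (-γ * t)) (exp (-γ * t) * -γ) t := by
      simpa using ((hasDerivAt_id' t).const_mul (-γ)).exp
    have hpow : HasDerivAt (fun t => t ^ (p + 1)) ((p + 1) * t ^ p) t := by
      simpa using hasDerivAt_rpow_const (p := p + 1) (Or.inl ht.1.ne')
    exact (hexp.fun_mul hpow).congr_deriv (by ring)
  have hcont : ContinuousOn (fun t => exp (-γ * t) * t ^ (p + 1)) (Icc 0 x) :=
    (continuous_exp.comp (continuous_const.mul continuous_id)).continuousOn.mul
      (continuousOn_id.rpow_const fun _ _ => Or.inr (by linarith))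
  have hI := intervalIntegrable_exp_mul_rpow (γ := γ) (x := x) hp
  have hI₁ := intervalIntegrable_exp_mul_rpow (γ := γ) (x := x) (p := p + 1) (by linarith)
  have hftc := integral_eq_sub_of_hasDerivAt_of_le hx hcont hderiv
    ((hI.const_mul (p + 1)).sub (hI₁.const_mul γ))
  rw [intervalIntegral.integral_sub (hI.const_mul (p + 1)) (hI₁.const_mul γ),
    intervalIntegral.integral_const_mul, intervalIntegral.integral_const_mul,
    zero_rpow (by linarith), mul_zero, sub_zero] at hftc
  exact hftc.symm

lemma two_mul_mul_le_add_mul_sq {a b d : ℝ} (ha : 0 ≤ a) (hb : 0 ≤ b) (hd : d ^ 2 ≤ a * b)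
    (t : ℝ) : 2 * d * t ≤ a + b * t ^ 2 := by
  rcases hb.eq_or_lt with rfl | hb
  · have : d = 0 := by simpa using hd
    simp [this, ha]
  · nlinarith [sq_nonneg (b * t - d)]

lemma two_mul_expRpowIntegral_add_one_le (hx : 0 ≤ x) (hp : -1 < p) {a b d : ℝ}
    (ha : 0 ≤ a) (hb : 0 ≤ b) (hd : d ^ 2 ≤ a * b) :
    2 * (d * expRpowIntegral γ x (p + 1))
      ≤ a * expRpowIntegral γ x p + b * expRpowIntegral γ x (p + 2) := by
  have hint := intervalIntegrable_exp_mul_rpow (γ := γ) (x := x) hp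
  have hint₁ := intervalIntegrable_exp_mul_rpow (γ := γ) (x := x) (p := p + 1) (by linarith)
  have hint₂ := intervalIntegrable_exp_mul_rpow (γ := γ) (x := x) (p := p + 2) (by linarith)
  simp only [expRpowIntegral, ← intervalIntegral.integral_const_mul]
  rw [← intervalIntegral.integral_add (hint.const_mul a) (hint₂.const_mul b)]
  refine integral_mono_on_of_le_Ioo hx ((hint₁.const_mul d).const_mul 2)
    ((hint.const_mul a).add (hint₂.const_mul b)) fun t ht => ?_
  have hquad := two_mul_mul_le_add_mul_sq ha hb hd t
  have hw : 0 ≤ exp (-γ * t) * t ^ p := mul_nonneg (exp_nonneg _) (rpow_nonneg ht.1.le p)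
  rw [rpow_add ht.1, rpow_add ht.1, rpow_one, rpow_two]
  calc 2 * (d * (exp (-γ * t) * (t ^ p * t)))
      = exp (-γ * t) * t ^ p * (2 * d * t) := by ring
    _ ≤ exp (-γ * t) * t ^ p * (a + b * t ^ 2) := mul_le_mul_of_nonneg_left hquad hw
    _ = _ := by ring

lemma lowerIncGamma_add_one_mul (hγ : 0 < γ) (hx : 0 ≤ x) (p : ℝ) :
    lowerIncGamma (p + 1) (γ * x) = γ ^ (p + 1) * expRpowIntegral γ x p := by
  have hsubst := intervalIntegral.smul_integral_comp_mul_left (a := 0) (b := x)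
    (fun u : ℝ => u ^ (p + 1 - 1) * exp (-u)) γ
  rw [mul_zero] at hsubst
  rw [lowerIncGamma, ← hsubst, smul_eq_mul, expRpowIntegral, rpow_add_one hγ.ne',
    mul_comm _ γ, mul_assoc, ← intervalIntegral.integral_const_mul (γ ^ p)]
  congr 1
  refine intervalIntegral.integral_congr fun t ht => ?_
  rw [uIcc_of_le hx] at ht
  simp only [add_sub_cancel_right, mul_rpow hγ.le ht.1, neg_mul]
  ring

end ExpRpowIntegral

section Series

variable {ν t : ℝ}

lemma rpow_two_mul_natCast (x : ℝ) (k : ℕ) : x ^ (2 * (k : ℝ)) = (x ^ 2) ^ k := by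
  rw [← pow_mul, ← rpow_natCast, Nat.cast_mul, Nat.cast_ofNat]

lemma summable_besselICoeff_mul_rpow (hν : -1 < ν) (ht : 0 < t) (p : ℝ) :
    Summable fun k => besselICoeff ν k * t ^ (p + 2 * k) := by
  refine ((summable_besselICoeff_mul_pow hν (t ^ 2)).mul_left (t ^ p)).congr fun k => ?_
  rw [rpow_add ht, rpow_two_mul_natCast]
  ring

lemma rpow_mul_besselI_term (ht : 0 < t) (k : ℕ) :
    t ^ ν * ((t / 2) ^ (ν + 2 * (k : ℝ)) / (Gamma (ν + k + 1) * k !))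
      = besselICoeff ν k * t ^ (2 * ν + 2 * k) := by
  rw [div_rpow ht.le zero_le_two, show 2 * ν + 2 * k = ν + (ν + 2 * k) by ring,
    rpow_add ht ν (ν + 2 * k), besselICoeff]
  field_simp

lemma rpow_mul_besselI (ht : 0 < t) :
    t ^ ν * besselI ν t = ∑' k, besselICoeff ν k * t ^ (2 * ν + 2 * k) := by
  simp only [besselI, ← tsum_mul_left, rpow_mul_besselI_term ht]

lemma rpow_mul_besselI_sub (hν : -1 < ν) (ht : 0 < t) :
    t ^ ν * (besselI ν t - t ^ ν / (Gamma (ν + 1) * 2 ^ ν))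
      = ∑' k, besselICoeff ν (k + 1) * t ^ (2 * ν + 2 * ↑(k + 1)) := by
  rw [mul_sub, rpow_mul_besselI ht, (summable_besselICoeff_mul_rpow hν ht _).tsum_eq_zero_add]
  have hfirst : besselICoeff ν 0 * t ^ (2 * ν + 2 * ((0 : ℕ) : ℝ))
      = t ^ ν * (t ^ ν / (Gamma (ν + 1) * 2 ^ ν)) := by
    simp only [besselICoeff, Nat.cast_zero, mul_zero, add_zero, Nat.factorial_zero, Nat.cast_one,
      mul_one, two_mul, rpow_add ht]
    field_simp
  rw [hfirst]
  ring

end Series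

lemma hasSum_intervalIntegral_of_nonneg {f : ℕ → ℝ → ℝ} {g : ℝ → ℝ} {a b : ℝ} (hab : a ≤ b)
    (hf : ∀ k, IntervalIntegrable (f k) volume a b) (hf0 : ∀ k, ∀ t ∈ Ioc a b, 0 ≤ f k t)
    (hfg : ∀ t ∈ Ioc a b, HasSum (f · t) (g t)) (hs : Summable fun k => ∫ t in a..b, f k t) :
    HasSum (fun k => ∫ t in a..b, f k t) (∫ t in a..b, g t) := by
  simp only [intervalIntegral.integral_of_le hab] at hs ⊢
  have hnorm : Summable fun k => ∫ t in Ioc a b, ‖f k t‖ := by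
    refine hs.congr fun k => setIntegral_congr_fun measurableSet_Ioc fun t ht => ?_
    exact (Real.norm_of_nonneg (hf0 k t ht)).symm
  rw [setIntegral_congr_fun measurableSet_Ioc fun t ht => (hfg t ht).tsum_eq.symm]
  exact hasSum_integral_of_summable_integral_norm (fun k => (hf k).1) hnorm

section BesselIntegral

variable {γ ν x : ℝ}

lemma hasSum_besselICoeff_mul_expRpowIntegral (hν : -(1 / 2) < ν) (hx : 0 ≤ x) :
    HasSum (fun k => besselICoeff ν k * expRpowIntegral γ x (2 * ν + 2 * k))
      (∫ t in (0 : ℝ)..x, exp (-γ * t) * t ^ ν * besselI ν t) := by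
  have hν' : -1 < ν := by linarith
  have hp : ∀ k : ℕ, -1 < 2 * ν + 2 * k := fun k => by linarith [k.cast_nonneg (α := ℝ)]
  have hsummable : Summable fun k => besselICoeff ν k * expRpowIntegral γ x (2 * ν + 2 * k) := by
    refine .of_nonneg_of_le (fun k => mul_nonneg (besselICoeff_pos hν' k).le
      (expRpowIntegral_nonneg hx)) (fun k => ?_)
      ((summable_besselICoeff_mul_pow hν' (x ^ 2)).mul_left (expRpowIntegral γ x (2 * ν)))
    have := expRpowIntegral_add_le (γ := γ) hx (hp 0) (q := 2 * k) (by positivity)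
    rw [Nat.cast_zero, mul_zero, add_zero, rpow_two_mul_natCast] at this
    nlinarith [besselICoeff_pos hν' k]
  simp only [← intervalIntegral.integral_const_mul, expRpowIntegral] at hsummable ⊢
  refine hasSum_intervalIntegral_of_nonneg hx
    (fun k => (intervalIntegrable_exp_mul_rpow (hp k)).const_mul _)
    (fun k t ht => mul_nonneg (besselICoeff_pos hν' k).le
      (mul_nonneg (exp_nonneg _) (rpow_nonneg ht.1.le _))) (fun t ht => ?_) hsummable
  rw [mul_assoc, rpow_mul_besselI ht.1, ← tsum_mul_left]
  refine ((summable_besselICoeff_mul_rpow hν' ht.1 _).mul_left (exp (-γ * t))).hasSum.congr_fun ?_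
  intro k
  ring

lemma hasSum_exp_mul_rpow_mul_besselI_sub (hν : -1 < ν) (hx : 0 < x) :
    HasSum (fun k => besselICoeff ν (k + 1) * (2 * ν + 2 * k + 2)
        * expRpowIntegral γ x (2 * ν + 2 * k + 1)
        - γ * (besselICoeff ν (k + 1) * expRpowIntegral γ x (2 * ν + 2 * ↑(k + 1))))
      (exp (-γ * x) * x ^ ν * (besselI ν x - x ^ ν / (Gamma (ν + 1) * 2 ^ ν))) := by
  rw [mul_assoc, rpow_mul_besselI_sub hν hx, ← tsum_mul_left]
  refine (((summable_besselICoeff_mul_rpow hν hx _).comp_injective (add_left_injective 1)).mul_left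
    (exp (-γ * x))).hasSum.congr_fun fun k => ?_
  have hp : -1 < 2 * ν + 2 * k + 1 := by linarith [k.cast_nonneg (α := ℝ)]
  have hexp : 2 * ν + 2 * ↑(k + 1) = 2 * ν + 2 * k + 1 + 1 := by push_cast; ring
  simp only [Function.comp_apply, hexp]
  linear_combination (-besselICoeff ν (k + 1)) * exp_mul_rpow_add_one_eq (γ := γ) hx.le hp

lemma lowerIncGamma_div_eq_besselICoeff_zero (hν : -1 < ν) (hγ : 0 < γ) (hx : 0 ≤ x) :
    lowerIncGamma (2 * ν + 1) (γ * x) / (Gamma (ν + 1) * 2 ^ ν * γ ^ (2 * ν))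
      = γ * (besselICoeff ν 0 * expRpowIntegral γ x (2 * ν + 2 * ((0 : ℕ) : ℝ))) := by
  have hΓ : 0 < Gamma (ν + 1) := Gamma_pos_of_pos (by linarith)
  have h2ν : (0 : ℝ) < 2 ^ ν := rpow_pos_of_pos two_pos ν
  have hγν : 0 < γ ^ (2 * ν) := rpow_pos_of_pos hγ _
  simp only [lowerIncGamma_add_one_mul hγ hx, rpow_add_one hγ.ne', besselICoeff, Nat.cast_zero,
    mul_zero, add_zero, Nat.factorial_zero, Nat.cast_one, mul_one]
  field_simp

lemma two_mul_besselICoeff_succ_mul_expRpowIntegral_le (hν : -(1 / 2) < ν) (hν0 : ν ≤ 0)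
    (hx : 0 ≤ x) (k : ℕ) :
    2 * (besselICoeff ν (k + 1) * (2 * ν + 2 * k + 2) * expRpowIntegral γ x (2 * ν + 2 * k + 1))
      ≤ besselICoeff ν k * expRpowIntegral γ x (2 * ν + 2 * k)
        + besselICoeff ν (k + 1) * expRpowIntegral γ x (2 * ν + 2 * ↑(k + 1)) := by
  have hexp : 2 * ν + 2 * ↑(k + 1) = 2 * ν + 2 * k + 2 := by push_cast; ring
  have hν' : -1 < ν := by linarith
  rw [hexp]
  exact two_mul_expRpowIntegral_add_one_le (p := 2 * ν + 2 * k) hx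
    (by linarith [k.cast_nonneg (α := ℝ)]) (besselICoeff_pos hν' k).le
    (besselICoeff_pos hν' (k + 1)).le (sq_besselICoeff_succ_mul_le hν' hν0 k)

end BesselIntegral

lemma tsum_lt_tsum_of_two_mul_le_add_succ {s m : ℕ → ℝ} (hs : Summable s) (hm : Summable m)
    (hs0 : 0 < s 0) (h : ∀ k, 2 * m k ≤ s k + s (k + 1)) : ∑' k, m k < ∑' k, s k := by
  have hs1 : Summable fun k => s (k + 1) := (summable_nat_add_iff 1).mpr hs
  have hle := (hm.mul_left 2).tsum_le_tsum h (hs.add hs1)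
  rw [tsum_mul_left, hs.tsum_add hs1] at hle
  linarith [hs.tsum_eq_zero_add]

theorem stmt_1 (γ ν : ℝ) (hγ0 : 0 < γ) (hγ1 : γ < 1) (hν1 : -(1/2) < ν) (hν2 : ν ≤ 0)
    (x : ℝ) (hx : 0 < x) :
    ∫ t in (0 : ℝ)..x, Real.exp (-γ * t) * t ^ ν * besselI ν t >
      (1 / (1 - γ)) *
        (Real.exp (-γ * x) * x ^ ν * (besselI ν x - x ^ ν / (Real.Gamma (ν + 1) * 2 ^ ν)) -
          lowerIncGamma (2 * ν + 1) (γ * x) / (Real.Gamma (ν + 1) * 2 ^ ν * γ ^ (2 * ν))) := by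
  have hν : -1 < ν := by linarith
  set s := fun k : ℕ => besselICoeff ν k * expRpowIntegral γ x (2 * ν + 2 * k)
  set m := fun k : ℕ => besselICoeff ν (k + 1) * (2 * ν + 2 * k + 2)
    * expRpowIntegral γ x (2 * ν + 2 * k + 1)
  have hs : HasSum s _ := hasSum_besselICoeff_mul_expRpowIntegral hν1 hx.le
  have hboundary : HasSum (fun k => m k - γ * s (k + 1)) _ :=
    hasSum_exp_mul_rpow_mul_besselI_sub hν hx
  have hs1 : Summable fun k => s (k + 1) := (summable_nat_add_iff 1).mpr hs.summable
  have hm : Summable m := by simpa using hboundary.summable.add (hs1.mul_left γ)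
  have hlt : ∑' k, m k < ∑' k, s k :=
    tsum_lt_tsum_of_two_mul_le_add_succ hs.summable hm
      (mul_pos (besselICoeff_pos hν 0) (expRpowIntegral_pos hx (by linarith)))
      (two_mul_besselICoeff_succ_mul_expRpowIntegral_le hν1 hν2 hx.le)
  have hsplit := hs.summable.tsum_eq_zero_add
  rw [← hs.tsum_eq, ← hboundary.tsum_eq, lowerIncGamma_div_eq_besselICoeff_zero hν hγ0 hx.le,
    hm.tsum_sub (hs1.mul_left γ), tsum_mul_left, gt_iff_lt, one_div_mul_eq_div,
    div_lt_iff₀ (by linarith)]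
  linear_combination hlt + γ * hsplit
end

section
/- Let 0 < γ < 1 and ν > −1/2. Then for all x > 0, ∫_0^x e^{−γt} t^ν I_ν(t) dt > e^{−γx} x^ν · ∑_{k=0}^∞ γ^k I_{ν+k+1}(x), where the series on the right-hand side converges absolutely. -/
/-!
Write `I_μ(t) = ∑_j c_{μ,j} t^{μ+2j}` (`besselCoeff`) and let
`a_{k,j} = γ^k c_{ν+k,j} ∫_0^x t^{2ν+k+2j} e^{-γt} dt` (`integralTerm`), so that the integral is
`∑_j a_{0,j}`, and let `b_{k,j}` (`boundaryTerm`) be the `j`-th term of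
`e^{-γx} x^ν γ^k I_{ν+k+1}(x)`, so that the right-hand side is `∑_k ∑_j b_{k,j}`.
Integration by parts, together with `c_{μ,j} = 2(μ+j+1) c_{μ+1,j}`, gives
`a_{k,j} = b_{k,j} + a_{k+1,j} + (k+1) γ^k c_{ν+k+1,j} ∫_0^x t^{2ν+k+2j} e^{-γt} dt`,
and telescoping in `k` yields `∑_k b_{k,j} < a_{0,j}`. All terms being positive, this makes the
double series of the `b_{k,j}` summable, hence the absolute convergence, and summing over `j`
first gives the strict inequality.
-/

open Real MeasureTheory

open Filter Set

noncomputable def besselCoeff (μ : ℝ) (j : ℕ) : ℝ :=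
  1 / (2 ^ (μ + 2 * j) * Gamma (μ + j + 1) * j.factorial)

section BesselCoeff

variable {μ : ℝ}

lemma Gamma_add_natCast_add_one_pos (hμ : -1 < μ) (j : ℕ) : 0 < Gamma (μ + j + 1) :=
  Gamma_pos_of_pos (by have := j.cast_nonneg (α := ℝ); linarith)

lemma besselCoeff_pos (hμ : -1 < μ) (j : ℕ) : 0 < besselCoeff μ j := by
  have := Gamma_add_natCast_add_one_pos hμ j
  unfold besselCoeff
  positivity

lemma besselCoeff_eq_mul_besselCoeff_add_one (hμ : -1 < μ) (j : ℕ) :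
    besselCoeff μ j = 2 * (μ + j + 1) * besselCoeff (μ + 1) j := by
  have hpos : 0 < μ + j + 1 := by have := j.cast_nonneg (α := ℝ); linarith
  have := Gamma_add_natCast_add_one_pos hμ j
  unfold besselCoeff
  rw [show μ + 1 + j + 1 = (μ + j + 1) + 1 by ring, Gamma_add_one hpos.ne',
    show μ + 1 + 2 * (j : ℝ) = 1 + (μ + 2 * j) by ring, rpow_add two_pos 1, rpow_one]
  field_simp

lemma besselCoeff_succ (hμ : -1 < μ) (j : ℕ) :
    besselCoeff μ (j + 1) = besselCoeff μ j / (4 * ((μ + j + 1) * (j + 1))) := by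
  have hpos : 0 < μ + j + 1 := by have := j.cast_nonneg (α := ℝ); linarith
  have := Gamma_add_natCast_add_one_pos hμ j
  unfold besselCoeff
  push_cast
  rw [show μ + (j + 1) + 1 = (μ + j + 1) + 1 by ring, Gamma_add_one hpos.ne',
    show μ + 2 * ((j : ℝ) + 1) = μ + 2 * j + 2 by ring, rpow_add two_pos, rpow_two,
    Nat.factorial_succ]
  push_cast
  field_simp
  ring

lemma besselI_eq_tsum {y : ℝ} (hy : 0 ≤ y) :
    besselI μ y = ∑' j, besselCoeff μ j * y ^ (μ + 2 * j) := by
  unfold besselI besselCoeff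
  congr 1 with j
  rw [div_rpow hy zero_le_two]
  field_simp

lemma summable_besselCoeff_mul_rpow (hμ : -1 < μ) {y : ℝ} (hy : 0 < y) :
    Summable fun j : ℕ ↦ besselCoeff μ j * y ^ (μ + 2 * j) := by
  have hterm (j : ℕ) : 0 < besselCoeff μ j * y ^ (μ + 2 * j) :=
    mul_pos (besselCoeff_pos hμ j) (rpow_pos_of_pos hy _)
  have hratio (j : ℕ) :
      ‖besselCoeff μ (j + 1) * y ^ (μ + 2 * (j + 1 : ℕ))‖ / ‖besselCoeff μ j * y ^ (μ + 2 * j)‖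
        = y ^ 2 / 4 / ((μ + j + 1) * (j + 1)) := by
    rw [Real.norm_of_nonneg (hterm _).le, Real.norm_of_nonneg (hterm _).le, besselCoeff_succ hμ,
      show μ + 2 * ((j + 1 : ℕ) : ℝ) = μ + 2 * j + 2 by push_cast; ring, rpow_add hy,
      rpow_two]
    have := besselCoeff_pos hμ j
    have := rpow_pos_of_pos hy (μ + 2 * j)
    field_simp
  refine summable_of_ratio_test_tendsto_lt_one zero_lt_one
    (Eventually.of_forall fun j ↦ (hterm j).ne') ?_
  simp_rw [hratio]
  refine tendsto_const_nhds.div_atTop (Tendsto.atTop_mul_atTop₀ ?_ ?_)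
  · exact tendsto_atTop_add_const_right _ _
      (tendsto_atTop_add_const_left _ _ tendsto_natCast_atTop_atTop)
  · exact tendsto_atTop_add_const_right _ _ tendsto_natCast_atTop_atTop

end BesselCoeff

noncomputable def rpowExpIntegral (γ x b : ℝ) : ℝ :=
  ∫ t in (0 : ℝ)..x, t ^ b * exp (-γ * t)

section RpowExpIntegral

variable {γ x b : ℝ}

lemma intervalIntegrable_rpow_mul_exp (hb : -1 < b) (x : ℝ) :
    IntervalIntegrable (fun t ↦ t ^ b * exp (-γ * t)) volume 0 x :=
  (intervalIntegral.intervalIntegrable_rpow' hb).mul_continuousOn (by fun_prop)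

lemma rpowExpIntegral_pos (hb : -1 < b) (hx : 0 < x) : 0 < rpowExpIntegral γ x b :=
  intervalIntegral.intervalIntegral_pos_of_pos_on (intervalIntegrable_rpow_mul_exp hb x)
    (fun _ ht ↦ mul_pos (rpow_pos_of_pos ht.1 b) (exp_pos _)) hx

lemma rpowExpIntegral_le (hγ : 0 ≤ γ) (hb : -1 < b) (hx : 0 ≤ x) :
    rpowExpIntegral γ x b ≤ x ^ (b + 1) / (b + 1) := by
  have hle : rpowExpIntegral γ x b ≤ ∫ t in (0 : ℝ)..x, t ^ b := by
    refine intervalIntegral.integral_mono_on hx (intervalIntegrable_rpow_mul_exp hb x)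
      (intervalIntegral.intervalIntegrable_rpow' hb) fun t ht ↦ ?_
    have : exp (-γ * t) ≤ 1 := exp_le_one_iff.mpr (by nlinarith [ht.1])
    nlinarith [rpow_nonneg ht.1 b]
  rwa [integral_rpow (Or.inl hb), zero_rpow (by linarith), sub_zero] at hle

lemma exp_mul_rpow_eq_sub {a : ℝ} (ha : 0 < a) (hx : 0 ≤ x) :
    exp (-γ * x) * x ^ a = a * rpowExpIntegral γ x (a - 1) - γ * rpowExpIntegral γ x a := by
  have hderiv : ∀ t ∈ Ioo 0 x, HasDerivAt (fun t ↦ t ^ a * exp (-γ * t))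
      (a * (t ^ (a - 1) * exp (-γ * t)) - γ * (t ^ a * exp (-γ * t))) t := by
    intro t ht
    exact ((hasDerivAt_rpow_const (p := a) (Or.inl ht.1.ne')).fun_mul
      ((hasDerivAt_id' t).const_mul (-γ)).exp).congr_deriv (by ring)
  have hcont : ContinuousOn (fun t ↦ t ^ a * exp (-γ * t)) (Icc 0 x) :=
    ((continuous_id.rpow_const fun _ ↦ Or.inr ha.le).mul (by fun_prop)).continuousOn
  have hint₁ := (intervalIntegrable_rpow_mul_exp (γ := γ) (by linarith : -1 < a - 1) x).const_mul a
  have hint₂ := (intervalIntegrable_rpow_mul_exp (γ := γ) (by linarith : -1 < a) x).const_mul γ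
  have := intervalIntegral.integral_eq_sub_of_hasDeriv_right_of_le hx hcont
    (fun t ht ↦ (hderiv t ht).hasDerivWithinAt) (hint₁.sub hint₂)
  rw [intervalIntegral.integral_sub hint₁ hint₂, intervalIntegral.integral_const_mul,
    intervalIntegral.integral_const_mul, zero_rpow ha.ne', zero_mul, sub_zero] at this
  rw [mul_comm, ← this]; rfl

end RpowExpIntegral

lemma sum_range_add_le_of_add_succ_le {f g : ℕ → ℝ} (h : ∀ k, f k + g (k + 1) ≤ g k) (n : ℕ) :
    ∑ k ∈ Finset.range n, f k + g n ≤ g 0 := by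
  induction n with
  | zero => simp
  | succ n ih => rw [Finset.sum_range_succ]; linarith [h n]

lemma summable_of_add_succ_le {f g : ℕ → ℝ} (hf : ∀ k, 0 ≤ f k) (hg : ∀ k, 0 ≤ g k)
    (h : ∀ k, f k + g (k + 1) ≤ g k) : Summable f :=
  summable_of_sum_range_le hf fun n ↦ by linarith [sum_range_add_le_of_add_succ_le h n, hg n]

lemma tsum_lt_of_add_succ_lt {f g : ℕ → ℝ} (hf : ∀ k, 0 ≤ f k) (hg : ∀ k, 0 ≤ g k)
    (h : ∀ k, f k + g (k + 1) < g k) : ∑' k, f k < g 0 := by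
  have hshift : ∑' k, f (k + 1) ≤ g 1 :=
    Real.tsum_le_of_sum_range_le (fun k ↦ hf _) fun n ↦ by
      linarith [sum_range_add_le_of_add_succ_le (f := fun k ↦ f (k + 1)) (g := fun k ↦ g (k + 1))
        (fun k ↦ (h (k + 1)).le) n, hg (n + 1)]
  rw [(summable_of_add_succ_le hf hg fun k ↦ (h k).le).tsum_eq_zero_add]
  linarith [h 0]

lemma intervalIntegral_eq_tsum_of_nonneg {f : ℝ → ℝ} {F : ℕ → ℝ → ℝ} {x : ℝ} (hx : 0 ≤ x)
    (hf : ∀ t ∈ Ioc 0 x, f t = ∑' j, F j t) (hF : ∀ j, IntervalIntegrable (F j) volume 0 x)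
    (hF0 : ∀ j, ∀ t ∈ Ioc 0 x, 0 ≤ F j t) (hsum : Summable fun j ↦ ∫ t in (0 : ℝ)..x, F j t) :
    ∫ t in (0 : ℝ)..x, f t = ∑' j, ∫ t in (0 : ℝ)..x, F j t := by
  simp only [intervalIntegral.integral_of_le hx] at hsum ⊢
  rw [setIntegral_congr_fun measurableSet_Ioc hf]
  refine (integral_tsum_of_summable_integral_norm (fun j ↦ (hF j).1) ?_).symm
  refine hsum.congr fun j ↦ setIntegral_congr_fun measurableSet_Ioc fun t ht ↦ ?_
  exact (Real.norm_of_nonneg (hF0 j t ht)).symm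

noncomputable def integralTerm (γ ν x : ℝ) (k j : ℕ) : ℝ :=
  γ ^ k * besselCoeff (ν + k) j * rpowExpIntegral γ x (2 * ν + k + 2 * j)

noncomputable def boundaryTerm (γ ν x : ℝ) (k j : ℕ) : ℝ :=
  exp (-γ * x) * x ^ ν * (γ ^ k * (besselCoeff (ν + k + 1) j * x ^ (ν + k + 1 + 2 * j)))

section DoubleSeries

variable {γ ν x : ℝ}

lemma integralTerm_pos (hγ : 0 < γ) (hν : -(1 / 2) < ν) (hx : 0 < x) (k j : ℕ) :
    0 < integralTerm γ ν x k j := by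
  have := besselCoeff_pos (μ := ν + k) (by have := k.cast_nonneg (α := ℝ); linarith) j
  have := rpowExpIntegral_pos (γ := γ) (b := 2 * ν + k + 2 * j)
    (by have := k.cast_nonneg (α := ℝ); have := j.cast_nonneg (α := ℝ); linarith) hx
  unfold integralTerm
  positivity

lemma boundaryTerm_nonneg (hγ : 0 ≤ γ) (hν : -1 < ν) (hx : 0 < x) (k j : ℕ) :
    0 ≤ boundaryTerm γ ν x k j := by
  have := besselCoeff_pos (μ := ν + k + 1) (by have := k.cast_nonneg (α := ℝ); linarith) j
  have := rpow_pos_of_pos hx ν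
  have := rpow_pos_of_pos hx (ν + k + 1 + 2 * j)
  unfold boundaryTerm
  positivity

lemma integralTerm_eq (hν : -(1 / 2) < ν) (hx : 0 < x) (k j : ℕ) :
    integralTerm γ ν x k j = boundaryTerm γ ν x k j + integralTerm γ ν x (k + 1) j +
      (k + 1) * γ ^ k * besselCoeff (ν + k + 1) j * rpowExpIntegral γ x (2 * ν + k + 2 * j) := by
  have hk := k.cast_nonneg (α := ℝ)
  have hj := j.cast_nonneg (α := ℝ)
  have hparts := exp_mul_rpow_eq_sub (γ := γ) (a := 2 * ν + k + 1 + 2 * j) (by linarith) hx.le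
  rw [show 2 * ν + k + 1 + 2 * j - 1 = 2 * ν + k + 2 * (j : ℝ) by ring] at hparts
  have hcoeff := besselCoeff_eq_mul_besselCoeff_add_one (μ := ν + k) (by linarith) j
  have hpow : x ^ ν * x ^ (ν + k + 1 + 2 * j) = x ^ (2 * ν + k + 1 + 2 * j) := by
    rw [← rpow_add hx]; ring_nf
  unfold integralTerm boundaryTerm
  rw [show ν + ((k + 1 : ℕ) : ℝ) = ν + k + 1 by push_cast; ring,
    show 2 * ν + ((k + 1 : ℕ) : ℝ) + 2 * j = 2 * ν + k + 1 + 2 * j by push_cast; ring, hcoeff]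
  linear_combination (-(γ ^ k * besselCoeff (ν + k + 1) j)) * hparts -
    exp (-γ * x) * γ ^ k * besselCoeff (ν + k + 1) j * hpow

lemma boundaryTerm_add_integralTerm_succ_lt (hγ : 0 < γ) (hν : -(1 / 2) < ν) (hx : 0 < x)
    (k j : ℕ) :
    boundaryTerm γ ν x k j + integralTerm γ ν x (k + 1) j < integralTerm γ ν x k j := by
  have := besselCoeff_pos (μ := ν + k + 1) (by have := k.cast_nonneg (α := ℝ); linarith) j
  have := rpowExpIntegral_pos (γ := γ) (b := 2 * ν + k + 2 * j)
    (by have := k.cast_nonneg (α := ℝ); have := j.cast_nonneg (α := ℝ); linarith) hx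
  rw [integralTerm_eq hν hx k j, lt_add_iff_pos_right]
  positivity

lemma tsum_boundaryTerm_lt_integralTerm_zero (hγ : 0 < γ) (hν : -(1 / 2) < ν) (hx : 0 < x)
    (j : ℕ) : ∑' k, boundaryTerm γ ν x k j < integralTerm γ ν x 0 j :=
  tsum_lt_of_add_succ_lt (fun k ↦ boundaryTerm_nonneg hγ.le (by linarith) hx k j)
    (fun k ↦ (integralTerm_pos hγ hν hx k j).le)
    (fun k ↦ boundaryTerm_add_integralTerm_succ_lt hγ hν hx k j)

lemma integralTerm_zero_le (hγ : 0 ≤ γ) (hν : -(1 / 2) < ν) (hx : 0 < x) (j : ℕ) :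
    integralTerm γ ν x 0 j ≤ x ^ (ν + 1) / (2 * ν + 1) * (besselCoeff ν j * x ^ (ν + 2 * j)) := by
  have hj := j.cast_nonneg (α := ℝ)
  have hI := rpowExpIntegral_le hγ (b := 2 * ν + 2 * j) (by linarith) hx.le
  rw [show 2 * ν + 2 * j + 1 = (ν + 1) + (ν + 2 * (j : ℝ)) by ring, rpow_add hx] at hI
  have hc := besselCoeff_pos (μ := ν) (by linarith) j
  have hpow := rpow_pos_of_pos hx (ν + 1)
  have hpow' := rpow_pos_of_pos hx (ν + 2 * j)
  simp only [integralTerm, pow_zero, Nat.cast_zero, add_zero, one_mul]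
  calc besselCoeff ν j * rpowExpIntegral γ x (2 * ν + 2 * j)
      ≤ besselCoeff ν j * (x ^ (ν + 1) * x ^ (ν + 2 * j) / (2 * ν + 1)) := by
        gcongr
        exact hI.trans (div_le_div_of_nonneg_left (by positivity) (by linarith) (by linarith))
    _ = _ := by ring

lemma summable_integralTerm_zero (hγ : 0 < γ) (hν : -(1 / 2) < ν) (hx : 0 < x) :
    Summable (integralTerm γ ν x 0) :=
  .of_nonneg_of_le (fun j ↦ (integralTerm_pos hγ hν hx 0 j).le) (integralTerm_zero_le hγ.le hν hx)
    ((summable_besselCoeff_mul_rpow (by linarith) hx).mul_left _)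

lemma summable_boundaryTerm_uncurry (hγ : 0 < γ) (hν : -(1 / 2) < ν) (hx : 0 < x) :
    Summable (Function.uncurry (boundaryTerm γ ν x)) := by
  have hnonneg : 0 ≤ fun p : ℕ × ℕ ↦ boundaryTerm γ ν x p.2 p.1 :=
    fun p ↦ boundaryTerm_nonneg hγ.le (by linarith) hx _ _
  refine ((summable_prod_of_nonneg hnonneg).2 ⟨fun j ↦ ?_, ?_⟩).prod_symm
  · exact summable_of_add_succ_le (fun k ↦ boundaryTerm_nonneg hγ.le (by linarith) hx k j)
      (fun k ↦ (integralTerm_pos hγ hν hx k j).le)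
      (fun k ↦ (boundaryTerm_add_integralTerm_succ_lt hγ hν hx k j).le)
  · exact .of_nonneg_of_le (fun j ↦ tsum_nonneg fun k ↦ hnonneg (j, k))
      (fun j ↦ (tsum_boundaryTerm_lt_integralTerm_zero hγ hν hx j).le)
      (summable_integralTerm_zero hγ hν hx)

lemma tsum_boundaryTerm (hx : 0 ≤ x) (k : ℕ) :
    ∑' j, boundaryTerm γ ν x k j = exp (-γ * x) * x ^ ν * (γ ^ k * besselI (ν + k + 1) x) := by
  rw [besselI_eq_tsum hx, ← tsum_mul_left, ← tsum_mul_left]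
  rfl

lemma integral_exp_mul_rpow_mul_besselI (hγ : 0 < γ) (hν : -(1 / 2) < ν) (hx : 0 < x) :
    ∫ t in (0 : ℝ)..x, exp (-γ * t) * t ^ ν * besselI ν t = ∑' j, integralTerm γ ν x 0 j := by
  have hexp (j : ℕ) : -1 < 2 * ν + 2 * (j : ℝ) := by have := j.cast_nonneg (α := ℝ); linarith
  have hintegral (j : ℕ) :
      ∫ t in (0 : ℝ)..x, besselCoeff ν j * (t ^ (2 * ν + 2 * j) * exp (-γ * t))
        = integralTerm γ ν x 0 j := by
    simp [integralTerm, rpowExpIntegral]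
  simp_rw [← hintegral]
  refine intervalIntegral_eq_tsum_of_nonneg hx.le (fun t ht ↦ ?_)
    (fun j ↦ (intervalIntegrable_rpow_mul_exp (hexp j) x).const_mul _)
    (fun j t ht ↦ mul_nonneg (besselCoeff_pos (by linarith) j).le
      (mul_nonneg (rpow_nonneg ht.1.le _) (exp_pos _).le))
    ((summable_integralTerm_zero hγ hν hx).congr fun j ↦ (hintegral j).symm)
  rw [besselI_eq_tsum ht.1.le, ← tsum_mul_left]
  refine tsum_congr fun j ↦ ?_
  rw [show 2 * ν + 2 * (j : ℝ) = ν + (ν + 2 * j) by ring, rpow_add ht.1 ν (ν + 2 * j)]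
  ring

end DoubleSeries

theorem stmt_3_general (γ ν : ℝ) (hγ0 : 0 < γ) (hν : -(1/2) < ν) (x : ℝ) (hx : 0 < x) :
    Summable (fun k : ℕ => γ ^ k * besselI (ν + (k : ℝ) + 1) x) ∧
      ∫ t in (0 : ℝ)..x, Real.exp (-γ * t) * t ^ ν * besselI ν t >
        Real.exp (-γ * x) * x ^ ν * ∑' k : ℕ, γ ^ k * besselI (ν + (k : ℝ) + 1) x := by
  have hν' : -1 < ν := by linarith
  have hjoint := summable_boundaryTerm_uncurry hγ0 hν hx
  have hfactor : exp (-γ * x) * x ^ ν ≠ 0 := (mul_pos (exp_pos _) (rpow_pos_of_pos hx ν)).ne'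
  have hsum : Summable (fun k : ℕ ↦ γ ^ k * besselI (ν + k + 1) x) := by
    rw [← summable_mul_left_iff hfactor]
    simpa only [Function.uncurry_apply_pair, tsum_boundaryTerm hx.le] using hjoint.prod
  refine ⟨hsum, ?_⟩
  calc exp (-γ * x) * x ^ ν * ∑' k : ℕ, γ ^ k * besselI (ν + k + 1) x
      = ∑' k, ∑' j, boundaryTerm γ ν x k j := by
        rw [← tsum_mul_left]
        exact tsum_congr fun k ↦ (tsum_boundaryTerm hx.le k).symm
    _ = ∑' j, ∑' k, boundaryTerm γ ν x k j := hjoint.tsum_comm.symm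
    _ < ∑' j, integralTerm γ ν x 0 j :=
        Summable.tsum_lt_tsum_of_nonneg (i := 0)
          (fun j ↦ tsum_nonneg fun k ↦ boundaryTerm_nonneg hγ0.le hν' hx k j)
          (fun j ↦ (tsum_boundaryTerm_lt_integralTerm_zero hγ0 hν hx j).le)
          (tsum_boundaryTerm_lt_integralTerm_zero hγ0 hν hx 0)
          (summable_integralTerm_zero hγ0 hν hx)
    _ = _ := (integral_exp_mul_rpow_mul_besselI hγ0 hν hx).symm

theorem stmt_3 (γ ν : ℝ) (hγ0 : 0 < γ) (hγ1 : γ < 1) (hν : -(1/2) < ν) (x : ℝ) (hx : 0 < x) :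
    Summable (fun k : ℕ => γ ^ k * besselI (ν + (k : ℝ) + 1) x) ∧
      ∫ t in (0 : ℝ)..x, Real.exp (-γ * t) * t ^ ν * besselI ν t >
        Real.exp (-γ * x) * x ^ ν * ∑' k : ℕ, γ ^ k * besselI (ν + (k : ℝ) + 1) x :=
  stmt_3_general γ ν hγ0 hν x hx
end

section
/- Let 0 < γ < 1 and ν > 1/2. Then for all x > 0, ∫_0^x e^{−γt} t^ν I_{ν+1}(t) dt > (1/(1−γ)) · ( 1 − 4ν(4ν+1) / ((2ν−1)(1−γ)x) ) · e^{−γx} x^ν I_ν(x). -/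
open Real MeasureTheory

/-
Put `δ = 1 - γ`, `s = A / δ` and `ψ(t) = δ⁻¹ (1 - s/t) e^{-γt} t^ν I_ν(t)`, so that the right-hand
side is `ψ(x)` and `ψ(s) = 0`. By `I_ν' = I_{ν+1} + (ν/t) I_ν`, the inequality
`ψ' ≤ e^{-γt} t^ν I_{ν+1}` on `[s, x]` is linear in `I_ν(t) / I_{ν+1}(t)`, and it holds at both ends
of the range `1 < I_ν / I_{ν+1} ≤ 1 + 2(ν+1)/t` as soon as `A ≥ 2ν + 3`, which is the case for
`A = 4ν(4ν+1)/(2ν-1)`. Integrating over `[s, x]` and adding the positive integral over `[0, s]`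
gives the strict inequality; for `x ≤ s` the right-hand side is not positive.
-/

open Set

noncomputable def besselITerm (μ : ℝ) (k : ℕ) (x : ℝ) : ℝ :=
  (x / 2) ^ (μ + 2 * (k : ℝ)) / (Real.Gamma (μ + (k : ℝ) + 1) * (Nat.factorial k : ℝ))

lemma Real.Gamma_le_Gamma_add_nat {y : ℝ} (hy : 1 ≤ y) (k : ℕ) :
    Real.Gamma y ≤ Real.Gamma (y + k) := by
  induction k with
  | zero => simp
  | succ n ih =>
    have hn : 1 ≤ y + n := by have := n.cast_nonneg (α := ℝ); linarith
    rw [Nat.cast_succ, ← add_assoc, Real.Gamma_add_one (by positivity)]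
    nlinarith [Real.Gamma_pos_of_pos (by positivity : 0 < y + n)]

section BesselSeries

variable {μ : ℝ}

lemma besselITerm_pos (hμ : 0 < μ) (k : ℕ) {x : ℝ} (hx : 0 < x) : 0 < besselITerm μ k x := by
  have := Real.Gamma_pos_of_pos (by positivity : 0 < μ + k + 1)
  unfold besselITerm
  positivity

lemma besselITerm_nonneg (hμ : 0 < μ) (k : ℕ) {x : ℝ} (hx : 0 ≤ x) : 0 ≤ besselITerm μ k x := by
  have := Real.Gamma_pos_of_pos (by positivity : 0 < μ + k + 1)
  unfold besselITerm
  positivity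

lemma besselITerm_le_besselITerm (hμ : 0 < μ) (k : ℕ) {x y : ℝ} (hx : 0 ≤ x) (hxy : x ≤ y) :
    besselITerm μ k x ≤ besselITerm μ k y := by
  have := Real.Gamma_pos_of_pos (by positivity : 0 < μ + k + 1)
  unfold besselITerm
  gcongr

lemma besselITerm_le (hμ : 0 < μ) (k : ℕ) {x : ℝ} (hx : 0 ≤ x) :
    besselITerm μ k x ≤ (x / 2) ^ μ / Real.Gamma (μ + 1) * (((x / 2) ^ 2) ^ k / k.factorial) := by
  have hΓ := Real.Gamma_pos_of_pos (by positivity : 0 < μ + 1)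
  have hΓk : Real.Gamma (μ + 1) ≤ Real.Gamma (μ + k + 1) := by
    simpa [add_right_comm] using Real.Gamma_le_Gamma_add_nat (by linarith : 1 ≤ μ + 1) k
  have hsplit : (x / 2) ^ (μ + 2 * (k : ℝ)) = (x / 2) ^ μ * ((x / 2) ^ 2) ^ k := by
    rw [Real.rpow_add' (by positivity) (by positivity), ← pow_mul, ← Real.rpow_natCast]
    push_cast
    ring_nf
  rw [besselITerm, hsplit, div_mul_div_comm]
  gcongr

lemma summable_besselITerm (hμ : 0 < μ) {x : ℝ} (hx : 0 ≤ x) :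
    Summable (besselITerm μ · x) :=
  .of_nonneg_of_le (besselITerm_nonneg hμ · hx) (besselITerm_le hμ · hx)
    ((Real.summable_pow_div_factorial _).mul_left _)

lemma hasSum_besselITerm (hμ : 0 < μ) {x : ℝ} (hx : 0 ≤ x) :
    HasSum (besselITerm μ · x) (besselI μ x) :=
  (summable_besselITerm hμ hx).hasSum

lemma besselI_pos (hμ : 0 < μ) {x : ℝ} (hx : 0 < x) : 0 < besselI μ x :=
  (summable_besselITerm hμ hx.le).tsum_pos (besselITerm_nonneg hμ · hx.le) 0
    (besselITerm_pos hμ 0 hx)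

lemma besselI_zero (hμ : 0 < μ) : besselI μ 0 = 0 := by
  have h (k : ℕ) : (0 : ℝ) ^ (μ + 2 * (k : ℝ)) = 0 := Real.zero_rpow (by positivity)
  simp [besselI, h]

lemma continuousOn_besselI (hμ : 0 < μ) {b : ℝ} (hb : 0 ≤ b) :
    ContinuousOn (besselI μ) (Icc 0 b) := by
  refine continuousOn_tsum (f := besselITerm μ) (fun k => ?_) (summable_besselITerm hμ hb)
    fun k x hx => ?_
  · exact ((continuous_id.div_const 2).rpow_const
      fun _ => Or.inr (by positivity)).continuousOn.div_const _
  · rw [Real.norm_of_nonneg (besselITerm_nonneg hμ k hx.1)]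
    exact besselITerm_le_besselITerm hμ k hx.1 hx.2

end BesselSeries

section BesselIdentities

variable {μ x : ℝ}

lemma two_mul_div_mul_besselITerm_succ (hμ : 0 < μ) (k : ℕ) (hx : 0 < x) :
    2 * ((k + 1 : ℕ) : ℝ) / x * besselITerm μ (k + 1) x = besselITerm (μ + 1) k x := by
  have hΓ := (Real.Gamma_pos_of_pos (by positivity : 0 < μ + 1 + k + 1)).ne'
  have hpow :
      (x / 2) ^ (μ + 2 * ((k + 1 : ℕ) : ℝ)) = (x / 2) ^ (μ + 1 + 2 * (k : ℝ)) * (x / 2) := by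
    rw [← Real.rpow_add_one (by positivity)]
    push_cast
    ring_nf
  simp only [besselITerm, hpow, Nat.factorial_succ]
  rw [show μ + ((k + 1 : ℕ) : ℝ) + 1 = μ + 1 + k + 1 by push_cast; ring]
  field_simp
  push_cast
  ring

lemma besselITerm_eq_mul_besselITerm_add_one (hμ : 0 < μ) (k : ℕ) (hx : 0 < x) :
    besselITerm μ k x = 2 * (μ + k + 1) / x * besselITerm (μ + 1) k x := by
  have hΓ := (Real.Gamma_pos_of_pos (by positivity : 0 < μ + k + 1)).ne'
  have hpow : (x / 2) ^ (μ + 1 + 2 * (k : ℝ)) = (x / 2) ^ (μ + 2 * (k : ℝ)) * (x / 2) := by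
    rw [← Real.rpow_add_one (by positivity)]
    ring_nf
  simp only [besselITerm, hpow]
  rw [show μ + 1 + k + 1 = (μ + k + 1) + 1 by ring,
    Real.Gamma_add_one (s := μ + k + 1) (by positivity)]
  field_simp

lemma hasSum_two_mul_div_mul_besselITerm (hμ : 0 < μ) (hx : 0 < x) :
    HasSum (fun k : ℕ => 2 * k / x * besselITerm μ k x) (besselI (μ + 1) x) := by
  have h := (hasSum_besselITerm (by positivity : 0 < μ + 1) hx.le).congr_fun
    fun k => two_mul_div_mul_besselITerm_succ hμ k hx
  rw [← hasSum_nat_add_iff' 1]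
  simpa using h

lemma besselI_eq_add (hμ : 0 < μ) (hx : 0 < x) :
    besselI μ x = 2 * (μ + 1) / x * besselI (μ + 1) x + besselI (μ + 2) x := by
  have h := ((hasSum_besselITerm (by positivity : 0 < μ + 1) hx.le).mul_left (2 * (μ + 1) / x)).add
    (hasSum_two_mul_div_mul_besselITerm (by positivity : 0 < μ + 1) hx)
  rw [show μ + 1 + 1 = μ + 2 by ring] at h
  refine (hasSum_besselITerm hμ hx.le).unique (h.congr_fun fun k => ?_)
  rw [besselITerm_eq_mul_besselITerm_add_one hμ k hx]
  ring

lemma summable_natCast_mul_besselITerm (hμ : 0 < μ) (hx : 0 < x) :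
    Summable (fun k : ℕ => k * besselITerm μ k x) := by
  refine ((hasSum_two_mul_div_mul_besselITerm hμ hx).summable.mul_left (x / 2)).congr fun k => ?_
  field_simp

lemma hasDerivAt_besselITerm (k : ℕ) (hx : 0 < x) :
    HasDerivAt (besselITerm μ k) ((μ + 2 * k) / x * besselITerm μ k x) x := by
  have h := (((hasDerivAt_id x).div_const 2).rpow_const (p := μ + 2 * (k : ℝ))
    (Or.inl (by simp [hx.ne']))).div_const (Real.Gamma (μ + k + 1) * k.factorial)
  refine h.congr_deriv ?_
  rw [besselITerm, Real.rpow_sub_one (by positivity)]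
  simp only [id]
  field_simp

lemma hasDerivAt_besselI (hμ : 0 < μ) (hx : 0 < x) :
    HasDerivAt (besselI μ) (besselI (μ + 1) x + μ / x * besselI μ x) x := by
  have hsum : HasSum (fun k : ℕ => (μ + 2 * k) / x * besselITerm μ k x)
      (besselI (μ + 1) x + μ / x * besselI μ x) := by
    refine ((hasSum_two_mul_div_mul_besselITerm hμ hx).add
      ((hasSum_besselITerm hμ hx.le).mul_left (μ / x))).congr_fun fun k => ?_
    ring
  rw [← hsum.tsum_eq]
  have hr : 0 < x / 2 := by positivity
  refine hasDerivAt_tsum_of_isPreconnected (t := Ioo (x / 2) (x + 1)) (y₀ := x)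
    (u := fun k => (μ + 2 * k) / (x / 2) * besselITerm μ k (x + 1)) ?_ isOpen_Ioo
    isPreconnected_Ioo (fun k y hy => hasDerivAt_besselITerm k (hr.trans hy.1))
    (fun k y hy => ?_) ⟨by linarith, by linarith⟩ (summable_besselITerm hμ hx.le)
    ⟨by linarith, by linarith⟩
  · have h := ((summable_besselITerm hμ (by positivity : (0 : ℝ) ≤ x + 1)).mul_left μ).add
      ((summable_natCast_mul_besselITerm hμ (by positivity : (0 : ℝ) < x + 1)).mul_left 2)
    refine (h.mul_left (x / 2)⁻¹).congr fun k => ?_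
    ring
  · have hy0 := hr.trans hy.1
    rw [Real.norm_of_nonneg (by have := besselITerm_nonneg hμ k hy0.le; positivity)]
    gcongr
    · exact besselITerm_nonneg hμ k (by positivity)
    · exact hy.1.le
    · exact besselITerm_le_besselITerm hμ k hy0.le hy.2.le

end BesselIdentities

section BesselComparison

variable {μ x : ℝ}

lemma hasDerivAt_besselI_add_one (hμ : 0 < μ) (hx : 0 < x) :
    HasDerivAt (besselI (μ + 1)) (besselI μ x - (μ + 1) / x * besselI (μ + 1) x) x := by
  refine (hasDerivAt_besselI (by positivity) hx).congr_deriv ?_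
  rw [show μ + 1 + 1 = μ + 2 by ring, besselI_eq_add hμ hx]
  ring

/- `h = I_μ - I_{μ+1}` satisfies `h + h' = (μ I_μ + (μ + 1) I_{μ+1}) / x > 0`, so `eˣ h` is strictly
increasing on `[0, ∞)` and vanishes at `0`. -/
lemma besselI_add_one_lt (hμ : 0 < μ) (hx : 0 < x) : besselI (μ + 1) x < besselI μ x := by
  set f : ℝ → ℝ := fun t => Real.exp t * (besselI μ t - besselI (μ + 1) t)
  have hderiv : ∀ t, 0 < t → HasDerivAt f
      (Real.exp t * ((μ * besselI μ t + (μ + 1) * besselI (μ + 1) t) / t)) t := fun t ht =>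
    ((Real.hasDerivAt_exp t).mul ((hasDerivAt_besselI hμ ht).sub
      (hasDerivAt_besselI_add_one hμ ht))).congr_deriv
      (by rw [Pi.sub_apply]; field_simp; ring)
  have hmono : StrictMonoOn f (Icc 0 x) := by
    refine strictMonoOn_of_deriv_pos (convex_Icc 0 x) ?_ fun t ht => ?_
    · exact Real.continuous_exp.continuousOn.mul
        ((continuousOn_besselI hμ hx.le).sub (continuousOn_besselI (by positivity) hx.le))
    · obtain ⟨ht0, -⟩ : t ∈ Ioo 0 x := by rwa [interior_Icc] at ht
      have := besselI_pos hμ ht0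
      have := besselI_pos (by positivity : 0 < μ + 1) ht0
      rw [(hderiv t ht0).deriv]
      positivity
  have h := hmono (left_mem_Icc.2 hx.le) (right_mem_Icc.2 hx.le) hx
  simp only [f, besselI_zero hμ, besselI_zero (by positivity : 0 < μ + 1), sub_zero, mul_zero] at h
  have := (mul_pos_iff_of_pos_left (Real.exp_pos x)).1 h
  linarith

lemma besselI_le_mul_besselI_add_one (hμ : 0 < μ) (hx : 0 < x) :
    besselI μ x ≤ (1 + 2 * (μ + 1) / x) * besselI (μ + 1) x := by
  have h := besselI_add_one_lt (μ := μ + 1) (by positivity) hx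
  rw [show μ + 1 + 1 = μ + 2 by ring] at h
  rw [besselI_eq_add hμ hx]
  linarith

end BesselComparison

lemma mul_le_mul_of_le_of_add_mul_le {B D u v w : ℝ} (hBD : B ≤ D) (hBDw : B + D * w ≤ D)
    (hv : 0 ≤ v) (hvu : v ≤ u) (hu : u ≤ (1 + w) * v) : B * u ≤ D * v := by
  rcases le_or_gt D 0 with hD | hD
  · nlinarith
  rcases le_or_gt B 0 with hB | hB
  · nlinarith
  · nlinarith

lemma deriv_ineq_of_ratio_bounds {γ ν s t u v : ℝ} (hγ : 0 ≤ γ) (hν : 1 / 2 ≤ ν) (hs : 0 < s)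
    (hA : 2 * ν + 3 ≤ (1 - γ) * s) (hst : s ≤ t) (hv : 0 ≤ v) (hvu : v ≤ u)
    (hu : u ≤ (1 + 2 * (ν + 1) / t) * v) :
    s / t ^ 2 * u + (1 - s / t) * (v + (2 * ν / t - γ) * u) ≤ (1 - γ) * v := by
  have ht : 0 < t := hs.trans_le hst
  set c := s / t with hc
  have hc0 : 0 ≤ c := by positivity
  have hc1 : c ≤ 1 := (div_le_one ht).2 hst
  have hct : c * t = s := by rw [hc]; field_simp
  have hBD : c / t + (1 - c) * (2 * ν / t - γ) ≤ c - γ := by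
    rw [← sub_nonneg]
    have : c - γ - (c / t + (1 - c) * (2 * ν / t - γ))
        = ((1 - γ) * s - 2 * ν + c * (2 * ν - 1)) / t := by
      rw [← hct]; field_simp; ring
    rw [this]
    apply div_nonneg _ ht.le
    nlinarith
  have hBDw : c / t + (1 - c) * (2 * ν / t - γ) + (c - γ) * (2 * (ν + 1) / t) ≤ c - γ := by
    rw [← sub_nonneg]
    have : c - γ - (c / t + (1 - c) * (2 * ν / t - γ) + (c - γ) * (2 * (ν + 1) / t))
        = ((1 - γ) * s - 2 * ν - 3 * c + 2 * (ν + 1) * γ) / t := by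
      rw [← hct]; field_simp; ring
    rw [this]
    apply div_nonneg _ ht.le
    nlinarith
  have := mul_le_mul_of_le_of_add_mul_le hBD hBDw hv hvu hu
  have hst2 : s / t ^ 2 = c / t := by rw [hc, div_div, sq]
  rw [hst2]
  linarith

lemma hasDerivAt_exp_mul_rpow_mul_besselI {γ ν t : ℝ} (hν : 0 < ν) (ht : 0 < t) :
    HasDerivAt (fun t => Real.exp (-γ * t) * t ^ ν * besselI ν t)
      (Real.exp (-γ * t) * t ^ ν * (besselI (ν + 1) t + (2 * ν / t - γ) * besselI ν t)) t := by
  have hexp : HasDerivAt (fun t => Real.exp (-γ * t)) (Real.exp (-γ * t) * -γ) t := by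
    simpa using ((hasDerivAt_id t).const_mul (-γ)).exp
  refine ((hexp.mul (Real.hasDerivAt_rpow_const (p := ν) (Or.inl ht.ne'))).mul
    (hasDerivAt_besselI hν ht)).congr_deriv ?_
  rw [Pi.mul_apply, Real.rpow_sub_one ht.ne']
  field_simp
  ring

/- With `ψ t = (1 - s / t) * (e^{-γt} t^ν I_ν(t)) / (1 - γ)`, the left-hand side is `ψ' t`. -/
lemma comparison_deriv_le {γ ν s t : ℝ} (hγ0 : 0 ≤ γ) (hγ1 : γ < 1) (hν : 1 / 2 ≤ ν) (hs : 0 < s)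
    (hA : 2 * ν + 3 ≤ (1 - γ) * s) (hst : s ≤ t) :
    1 / (1 - γ) * (s / t ^ 2 * (Real.exp (-γ * t) * t ^ ν * besselI ν t) +
      (1 - s / t) * (Real.exp (-γ * t) * t ^ ν * (besselI (ν + 1) t + (2 * ν / t - γ) *
        besselI ν t))) ≤ Real.exp (-γ * t) * t ^ ν * besselI (ν + 1) t := by
  have hδ : 0 < 1 - γ := by linarith
  have hν0 : 0 < ν := by linarith
  have ht : 0 < t := hs.trans_le hst
  have hineq := deriv_ineq_of_ratio_bounds hγ0 hν hs hA hst
    (besselI_pos (by positivity : 0 < ν + 1) ht).le (besselI_add_one_lt hν0 ht).le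
    (besselI_le_mul_besselI_add_one hν0 ht)
  calc _ = Real.exp (-γ * t) * t ^ ν / (1 - γ) * (s / t ^ 2 * besselI ν t +
        (1 - s / t) * (besselI (ν + 1) t + (2 * ν / t - γ) * besselI ν t)) := by ring
    _ ≤ Real.exp (-γ * t) * t ^ ν / (1 - γ) * ((1 - γ) * besselI (ν + 1) t) := by gcongr
    _ = _ := by field_simp

theorem sub_lt_integral_of_hasDerivAt_le {φ ψ ψ' : ℝ → ℝ} {a s b : ℝ} (has : a < s) (hsb : s ≤ b)
    (hφ : ContinuousOn φ (Icc a b)) (hφpos : ∀ t ∈ Ioo a b, 0 < φ t)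
    (hψ : ∀ t ∈ Icc s b, HasDerivAt ψ (ψ' t) t) (hψφ : ∀ t ∈ Ioo s b, ψ' t ≤ φ t) :
    ψ b - ψ s < ∫ t in a..b, φ t := by
  have hint_as : IntervalIntegrable φ volume a s :=
    (hφ.mono (Icc_subset_Icc le_rfl hsb)).intervalIntegrable_of_Icc has.le
  have hφ_sb : ContinuousOn φ (Icc s b) := hφ.mono (Icc_subset_Icc has.le le_rfl)
  rw [← intervalIntegral.integral_add_adjacent_intervals hint_as
    (hφ_sb.intervalIntegrable_of_Icc hsb)]
  have hpos : 0 < ∫ t in a..s, φ t :=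
    intervalIntegral.intervalIntegral_pos_of_pos_on hint_as
      (fun t ht => hφpos t ⟨ht.1, ht.2.trans_le hsb⟩) has
  have hle : ψ b - ψ s ≤ ∫ t in s..b, φ t :=
    intervalIntegral.sub_le_integral_of_hasDeriv_right_of_le hsb
      (fun t ht => (hψ t ht).continuousAt.continuousWithinAt)
      (fun t ht => (hψ t (Ioo_subset_Icc_self ht)).hasDerivWithinAt)
      hφ_sb.integrableOn_Icc hψφ
  linarith

theorem exp_mul_rpow_mul_besselI_lt_integral {γ ν A x : ℝ} (hγ0 : 0 ≤ γ) (hγ1 : γ < 1)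
    (hν : 1 / 2 ≤ ν) (hA : 2 * ν + 3 ≤ A) (hx : 0 < x) :
    1 / (1 - γ) * (1 - A / ((1 - γ) * x)) * (Real.exp (-γ * x) * x ^ ν * besselI ν x) <
      ∫ t in (0 : ℝ)..x, Real.exp (-γ * t) * t ^ ν * besselI (ν + 1) t := by
  have hδ : 0 < 1 - γ := by linarith
  have hν0 : 0 < ν := by linarith
  have hφ : ContinuousOn (fun t => Real.exp (-γ * t) * t ^ ν * besselI (ν + 1) t) (Icc 0 x) :=
    ((Real.continuous_exp.comp (continuous_const.mul continuous_id)).continuousOn.mul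
      (continuous_id.rpow_const fun _ => Or.inr hν0.le).continuousOn).mul
      (continuousOn_besselI (by positivity) hx.le)
  have hφpos : ∀ t ∈ Ioo 0 x, 0 < Real.exp (-γ * t) * t ^ ν * besselI (ν + 1) t :=
    fun t ⟨ht0, _⟩ => by
      have := besselI_pos (by positivity : 0 < ν + 1) ht0
      positivity
  rw [← div_div]
  set s := A / (1 - γ) with hs_def
  have hs : 0 < s := div_pos (by linarith) hδ
  rcases le_or_gt x s with hxs | hsx
  · have hcoef : 1 - s / x ≤ 0 := by rw [sub_nonpos, le_div_iff₀ hx]; linarith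
    have := besselI_pos hν0 hx
    calc 1 / (1 - γ) * (1 - s / x) * (Real.exp (-γ * x) * x ^ ν * besselI ν x) ≤ 0 :=
          mul_nonpos_of_nonpos_of_nonneg (mul_nonpos_of_nonneg_of_nonpos (by positivity) hcoef)
            (by positivity)
      _ < _ := intervalIntegral.intervalIntegral_pos_of_pos_on
          (hφ.intervalIntegrable_of_Icc hx.le) hφpos hx
  · have hderiv : ∀ t ∈ Icc s x, HasDerivAt
        (fun t => 1 / (1 - γ) * (1 - s / t) * (Real.exp (-γ * t) * t ^ ν * besselI ν t))
        (1 / (1 - γ) * (s / t ^ 2 * (Real.exp (-γ * t) * t ^ ν * besselI ν t) + (1 - s / t) *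
          (Real.exp (-γ * t) * t ^ ν * (besselI (ν + 1) t + (2 * ν / t - γ) * besselI ν t))))
        t := by
      intro t ht
      have ht0 : 0 < t := hs.trans_le ht.1
      have hcoef : HasDerivAt (fun t => 1 - s / t) (s / t ^ 2) t := by
        simpa [div_eq_mul_inv] using ((hasDerivAt_inv ht0.ne').const_mul s).const_sub 1
      exact ((hcoef.const_mul _).mul (hasDerivAt_exp_mul_rpow_mul_besselI hν0 ht0)).congr_deriv
        (by ring)
    have h := sub_lt_integral_of_hasDerivAt_le hs hsx.le hφ hφpos hderiv
      fun t ht => comparison_deriv_le hγ0 hγ1 hν hs (by rw [hs_def]; field_simp; linarith) ht.1.le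
    rwa [div_self hs.ne', sub_self, mul_zero, zero_mul, sub_zero] at h

theorem stmt_18 (γ ν : ℝ) (hγ0 : 0 < γ) (hγ1 : γ < 1) (hν : 1/2 < ν) (x : ℝ) (hx : 0 < x) :
    ∫ t in (0 : ℝ)..x, Real.exp (-γ * t) * t ^ ν * besselI (ν + 1) t >
      (1 / (1 - γ)) * (1 - 4 * ν * (4 * ν + 1) / ((2 * ν - 1) * (1 - γ) * x)) *
        (Real.exp (-γ * x) * x ^ ν * besselI ν x) := by
  have hA : 2 * ν + 3 ≤ 4 * ν * (4 * ν + 1) / (2 * ν - 1) := by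
    rw [le_div_iff₀ (by linarith)]
    nlinarith
  have h := exp_mul_rpow_mul_besselI_lt_integral hγ0.le hγ1 hν.le hA hx
  rwa [div_div, ← mul_assoc (2 * ν - 1)] at h
end
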